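/- arXiv:1603.09233 — 2 statements merged into one kernel-verified Lean document; each statement's English description precedes it below -/
import Mathlib

section
/- Let 0 < q, q* < 1, 0 ≤ ρ, ρ* < 1 with q ≠ q*. If for two distinct positive integers k ≠ k' both d_k(q,ρ) = 0 and d_{k'}(q,ρ) = 0, where d_k(q,ρ) = [(1-q)^k(ρ-1) - (1-q*)^k(ρ*-1)]², then a contradiction follows; i.e., d_k(q,ρ) and d_{k'}(q,ρ) cannot both be zero. -/
/-- Squared difference of reward-1 probabilities between model `(q,ρ)` and the true
model `(qs,ρs)` under the waiting-time-`k` policy. -/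
noncomputable def d (qs ρs q ρ : ℝ) (k : ℕ) : ℝ :=
  ((1 - q) ^ k * (ρ - 1) - (1 - qs) ^ k * (ρs - 1)) ^ 2

lemma aux_cross (a b x y : ℝ) (hx : x ≠ 0) (k k' : ℕ)
    (e1 : a ^ k * x = b ^ k * y) (e2 : a ^ k' * x = b ^ k' * y) :
    a ^ k * b ^ k' = a ^ k' * b ^ k := by
  have h : (a ^ k * b ^ k') * y = (a ^ k' * b ^ k) * y := by
    rw [mul_assoc, ← e2, mul_assoc, ← e1]; ring
  rcases eq_or_ne y 0 with hy | hy
  · have h1 : a ^ k = 0 := by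
      have h0 : a ^ k * x = 0 := by rw [e1, hy, mul_zero]
      rcases mul_eq_zero.mp h0 with h' | h'
      · exact h'
      · exact absurd h' hx
    have h2 : a ^ k' = 0 := by
      have h0 : a ^ k' * x = 0 := by rw [e2, hy, mul_zero]
      rcases mul_eq_zero.mp h0 with h' | h'
      · exact h'
      · exact absurd h' hx
    simp [h1, h2]
  · exact mul_right_cancel₀ hy h

lemma aux_pow_eq (a b : ℝ) (ha : 0 < a) (hb : 0 < b) (k k' : ℕ) (hkk : k ≠ k')
    (h : a ^ k * b ^ k' = a ^ k' * b ^ k) : a = b := by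
  wlog hlt : k < k' generalizing k k'
  · exact this k' k hkk.symm h.symm (by omega)
  have hak : (0:ℝ) < a ^ k := pow_pos ha k
  have hbk : (0:ℝ) < b ^ k := pow_pos hb k
  have h' : a ^ k * (b ^ (k' - k) * b ^ k) = a ^ k * (a ^ (k' - k) * b ^ k) := by
    calc a ^ k * (b ^ (k' - k) * b ^ k) = a ^ k * b ^ k' := by
          rw [← pow_add]; congr 2; omega
      _ = a ^ k' * b ^ k := h
      _ = a ^ k * (a ^ (k' - k) * b ^ k) := by
          rw [← mul_assoc, ← pow_add]; congr 2; omega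
  have h'' := mul_left_cancel₀ hak.ne' h'
  have key : b ^ (k' - k) = a ^ (k' - k) := mul_right_cancel₀ hbk.ne' h''
  have hn : k' - k ≠ 0 := by omega
  rcases lt_trichotomy a b with h1 | h1 | h1
  · have := pow_lt_pow_left₀ h1 ha.le hn
    linarith [key]
  · exact h1
  · have := pow_lt_pow_left₀ h1 hb.le hn
    linarith [key]

/-- A model `(q,ρ)` with `q ≠ q*` cannot be observationally indistinguishable from
`(q*,ρ*)` under two distinct waiting-time policies. -/
theorem not_both_d_zero (qs ρs q ρ : ℝ) (k k' : ℕ)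
    (hq0 : 0 < q) (hq1 : q < 1) (hqs0 : 0 < qs) (hqs1 : qs < 1)
    (hρ0 : 0 ≤ ρ) (hρ1 : ρ < 1) (hρs0 : 0 ≤ ρs) (hρs1 : ρs < 1)
    (hqne : q ≠ qs) (hk : 1 ≤ k) (hk' : 1 ≤ k') (hkk : k ≠ k') :
    ¬ (d qs ρs q ρ k = 0 ∧ d qs ρs q ρ k' = 0) := by
  rintro ⟨h1, h2⟩
  unfold d at h1 h2
  have e1 : (1 - q) ^ k * (ρ - 1) = (1 - qs) ^ k * (ρs - 1) :=
    sub_eq_zero.mp ((pow_eq_zero_iff two_ne_zero).mp h1)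
  have e2 : (1 - q) ^ k' * (ρ - 1) = (1 - qs) ^ k' * (ρs - 1) :=
    sub_eq_zero.mp ((pow_eq_zero_iff two_ne_zero).mp h2)
  have hx : ρ - 1 ≠ 0 := by linarith
  have hcross := aux_cross (1 - q) (1 - qs) (ρ - 1) (ρs - 1) hx k k' e1 e2
  have := aux_pow_eq (1 - q) (1 - qs) (by linarith) (by linarith) k k' hkk hcross
  exact hqne (by linarith)
end

section
/- Fix (q*,ρ*) with 0 < q* < 1, 0 ≤ ρ* < 1, ε₁ > 0, and k_max ∈ ℕ. For a finite parameter set 𝒳 ⊆ (0,1)×[0,1) with every (q,ρ) ∈ 𝒳 satisfying |q - q*| ≥ ε₁ or (q,ρ) = (q*,ρ*), there exists Δ > 0 such that for every (q,ρ) ∈ 𝒳 with q ≠ q*, the set {k ∈ {1,…,k_max} : d_k(q,ρ) ≥ Δ} has cardinality at least k_max - 1, where d_k(q,ρ) = [(1-q)^k(ρ-1) - (1-q*)^k(ρ*-1)]². -/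
lemma aux_unique (x y u v : ℝ) (hx : 0 < x) (hy : 0 < y) (hxy : x ≠ y) (hv : v ≠ 0)
    {a b : ℕ} (hab : a < b) (h1 : x ^ a * u = y ^ a * v) (h2 : x ^ b * u = y ^ b * v) :
    False := by
  have hxb : x ^ b * u = x ^ (b - a) * (y ^ a * v) := by
    rw [← h1, ← mul_assoc, ← pow_add]
    congr 2
    omega
  have hyb : y ^ (b - a) * (y ^ a * v) = y ^ b * v := by
    rw [← mul_assoc, ← pow_add]
    congr 2
    omega
  have key : y ^ (b - a) * (y ^ a * v) = x ^ (b - a) * (y ^ a * v) := by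
    rw [hyb, ← h2, hxb]
  have hya : y ^ a * v ≠ 0 := mul_ne_zero (pow_ne_zero _ (ne_of_gt hy)) hv
  have hpow : y ^ (b - a) = x ^ (b - a) := mul_right_cancel₀ hya key
  have hba : b - a ≠ 0 := by omega
  rcases lt_trichotomy x y with h | h | h
  · have := pow_lt_pow_left₀ h (le_of_lt hx) hba
    linarith [hpow ▸ this]
  · exact hxy h
  · have := pow_lt_pow_left₀ h (le_of_lt hy) hba
    linarith [hpow ▸ this]

/-- Over a finite parameter set whose members are either the true model or have
`|q - q*| ≥ ε₁`, there is a uniform gap `Δ > 0` such that every model with `q ≠ q*`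
has at least `k_max - 1` of its divergences `d_k` above `Δ`. -/
theorem uniform_gap (qs ρs : ℝ) (ε₁ : ℝ) (kmax : ℕ)
    (hqs0 : 0 < qs) (hqs1 : qs < 1) (hρs0 : 0 ≤ ρs) (hρs1 : ρs < 1)
    (hε₁ : 0 < ε₁)
    (𝒳 : Finset (ℝ × ℝ))
    (h𝒳 : ∀ p ∈ 𝒳, (0 < p.1 ∧ p.1 < 1 ∧ 0 ≤ p.2 ∧ p.2 < 1) ∧
      (|p.1 - qs| ≥ ε₁ ∨ p = (qs, ρs))) :
    ∃ Δ : ℝ, 0 < Δ ∧ ∀ p ∈ 𝒳, p.1 ≠ qs →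
      kmax - 1 ≤ ((Finset.Icc 1 kmax).filter
        (fun k => Δ ≤ d qs ρs p.1 p.2 k)).card := by
  classical
  set f : (ℝ × ℝ) × ℕ → ℝ := fun pk => d qs ρs pk.1.1 pk.1.2 pk.2 with hf
  set T := (𝒳 ×ˢ Finset.Icc 1 kmax).filter (fun pk => 0 < f pk) with hT
  set S := insert (1 : ℝ) (T.image f) with hS
  have hSne : S.Nonempty := ⟨1, Finset.mem_insert_self _ _⟩
  refine ⟨S.min' hSne, ?_, ?_⟩
  · rcases Finset.mem_insert.mp (S.min'_mem hSne) with h | h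
    · rw [h]; norm_num
    · obtain ⟨pk, hpk, hval⟩ := Finset.mem_image.mp h
      have := (Finset.mem_filter.mp hpk).2
      rw [← hval]; exact this
  · intro p hp hne
    -- at most one k in Icc has d = 0
    have hk0 : ((Finset.Icc 1 kmax).filter
        (fun k => ¬ 0 < d qs ρs p.1 p.2 k)).card ≤ 1 := by
      rw [Finset.card_le_one]
      intro a ha b hb
      simp only [Finset.mem_filter, Finset.mem_Icc, not_lt] at ha hb
      have hda : d qs ρs p.1 p.2 a = 0 := le_antisymm ha.2 (sq_nonneg _)
      have hdb : d qs ρs p.1 p.2 b = 0 := le_antisymm hb.2 (sq_nonneg _)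
      have hea : (1 - p.1) ^ a * (p.2 - 1) = (1 - qs) ^ a * (ρs - 1) := by
        have := sq_eq_zero_iff.mp hda
        linarith
      have heb : (1 - p.1) ^ b * (p.2 - 1) = (1 - qs) ^ b * (ρs - 1) := by
        have := sq_eq_zero_iff.mp hdb
        linarith
      obtain ⟨⟨hq0, hq1, hρ0, hρ1⟩, _⟩ := h𝒳 p hp
      have hx : 0 < 1 - p.1 := by linarith
      have hy : 0 < 1 - qs := by linarith
      have hxy : (1 - p.1) ≠ (1 - qs) := fun h => hne (by linarith)
      have hv : ρs - 1 ≠ 0 := by intro h; linarith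
      by_contra hab
      rcases Nat.lt_or_ge a b with h | h
      · exact aux_unique _ _ _ _ hx hy hxy hv h hea heb
      · have h' : b < a := lt_of_le_of_ne h (Ne.symm hab)
        exact aux_unique _ _ _ _ hx hy hxy hv h' heb hea
    have hsub : ((Finset.Icc 1 kmax).filter (fun k => 0 < d qs ρs p.1 p.2 k)) ⊆
        ((Finset.Icc 1 kmax).filter (fun k => S.min' hSne ≤ d qs ρs p.1 p.2 k)) := by
      intro k hk
      simp only [Finset.mem_filter] at hk ⊢
      refine ⟨hk.1, ?_⟩
      have hmem : (p, k) ∈ T := by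
        rw [hT, Finset.mem_filter, Finset.mem_product]
        exact ⟨⟨hp, hk.1⟩, hk.2⟩
      have : f (p, k) ∈ S := Finset.mem_insert_of_mem (Finset.mem_image_of_mem f hmem)
      exact S.min'_le _ this
    have hcards := Finset.card_filter_add_card_filter_not
      (s := Finset.Icc 1 kmax) (p := fun k => 0 < d qs ρs p.1 p.2 k)
    have hicc : (Finset.Icc 1 kmax).card = kmax := by
      rw [Nat.card_Icc]; omega
    have := Finset.card_le_card hsub
    omega
end
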